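/- arXiv:2506.19508 — 3 statements merged into one kernel-verified Lean document; each statement's English description precedes it below -/
import Mathlib

section
/- Let ψ : ℝ → ℝ be a C¹ function which is 1-periodic with ∫₀¹ ψ(x)dx = 0, let p and q be coprime integers with q ≥ 1, let a ∈ ℝ, and let Ψ(x) = ∑_{n∈ℤ∖{0}} c_{nq} e^{2πinqx}, where c_m are the Fourier coefficients of ψ. If min_{x∈[0,1]}(a + ψ(x)) > 0, then min_{x∈[0,1]}(a + Ψ(x)) > 0. -/
/-!
Averaging the Fourier series of `ψ` over the `q` translates `x + j / q` kills every frequency not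
divisible by `q`, because the `q`-th roots of unity sum to zero. Hence
`Ψ x = q⁻¹ * ∑ j < q, ψ (x + j / q)`, and `a + Ψ x` is a mean of values of the positive function
`a + ψ`. The analytic input is the pointwise convergence of the Fourier series of a `C¹` periodic
function: its coefficients are `c'ₙ / (2πin)`, which are summable since `∑ |c'ₙ|² < ∞`.
-/

open Filter Real

section

open Complex MeasureTheory Set Function

theorem Continuous.memLp_restrict_Ioc {E : Type*} [NormedAddCommGroup E] {f : ℝ → E}
    (hf : Continuous f) (p : ENNReal) (a b : ℝ) : MemLp f p (volume.restrict (Ioc a b)) := by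
  obtain ⟨C, hC⟩ := (isCompact_Icc (a := a) (b := b)).exists_bound_of_continuousOn hf.continuousOn
  refine (memLp_top_of_bound hf.aestronglyMeasurable C ?_).mono_exponent le_top
  exact ae_restrict_of_forall_mem measurableSet_Ioc fun x hx => hC x (Ioc_subset_Icc_self hx)

section FourierCoeffOn

variable {a b : ℝ} (hab : a < b) {f : ℝ → ℂ}

theorem fourierCoeffOn_eq_div_mul_fourierCoeffOn_deriv (hf : ContDiff ℝ 1 f) (hfab : f a = f b)
    {n : ℤ} (hn : n ≠ 0) :
    fourierCoeffOn hab f n = (b - a) / (2 * π * I * n) * fourierCoeffOn hab (deriv f) n := by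
  rw [fourierCoeffOn_of_hasDerivAt hab hn
    (fun x _ => (hf.differentiable one_ne_zero x).hasDerivAt)
    ((hf.continuous_deriv le_rfl).intervalIntegrable a b), hfab, sub_self, mul_zero, zero_sub]
  have : (n : ℂ) ≠ 0 := Int.cast_ne_zero.2 hn
  have : (π : ℂ) ≠ 0 := ofReal_ne_zero.2 pi_ne_zero
  field_simp

theorem norm_fourierCoeffOn_le_of_contDiff (hf : ContDiff ℝ 1 f) (hfab : f a = f b)
    {n : ℤ} (hn : n ≠ 0) :
    ‖fourierCoeffOn hab f n‖ ≤
      (b - a) * (‖fourierCoeffOn hab (deriv f) n‖ ^ 2 + 1 / (n : ℝ) ^ 2) := by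
  rw [fourierCoeffOn_eq_div_mul_fourierCoeffOn_deriv hab hf hfab hn]
  set d := ‖fourierCoeffOn hab (deriv f) n‖
  have hba : 0 < b - a := sub_pos.2 hab
  have hamgm : d * |(n : ℝ)|⁻¹ ≤ d ^ 2 + 1 / (n : ℝ) ^ 2 := by
    rw [one_div, ← sq_abs (n : ℝ), ← inv_pow]
    nlinarith [sq_nonneg (d - |(n : ℝ)|⁻¹)]
  calc ‖(b - a) / (2 * π * I * n) * fourierCoeffOn hab (deriv f) n‖
        = (b - a) * (d * |(n : ℝ)|⁻¹) / (2 * π) := by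
        rw [← ofReal_sub]
        simp only [d, norm_mul, norm_div, norm_real, norm_I, Complex.norm_ofNat, norm_intCast,
          Real.norm_of_nonneg hba.le, Real.norm_of_nonneg pi_pos.le]
        ring
    _ ≤ (b - a) * (d * |(n : ℝ)|⁻¹) := div_le_self (by positivity) (by linarith [pi_gt_three])
    _ ≤ (b - a) * (d ^ 2 + 1 / (n : ℝ) ^ 2) := by gcongr

theorem summable_fourierCoeffOn_of_contDiff (hf : ContDiff ℝ 1 f) (hfab : f a = f b) :
    Summable (fourierCoeffOn hab f) := by
  have hderiv : Summable fun n => ‖fourierCoeffOn hab (deriv f) n‖ ^ 2 :=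
    (hasSum_sq_fourierCoeffOn hab
      ((hf.continuous_deriv le_rfl).memLp_restrict_Ioc 2 a b)).summable
  have hinv : Summable fun n : ℤ => 1 / (n : ℝ) ^ 2 := Real.summable_one_div_int_pow.2 one_lt_two
  refine Summable.of_norm_bounded_eventually ((hderiv.add hinv).mul_left (b - a)) ?_
  filter_upwards [(Set.finite_singleton (0 : ℤ)).compl_mem_cofinite] with n hn
  exact norm_fourierCoeffOn_le_of_contDiff hab hf hfab hn

theorem hasSum_fourierCoeffOn_smul_fourier (hf : Continuous f) (hper : Periodic f (b - a))
    (hsum : Summable (fourierCoeffOn hab f)) (x : ℝ) :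
    HasSum (fun n => fourierCoeffOn hab f n • fourier n (x : AddCircle (b - a))) (f x) := by
  have : Fact (0 < b - a) := ⟨sub_pos.2 hab⟩
  let F : C(AddCircle (b - a), ℂ) := ⟨hper.lift, continuous_coinduced_dom.mpr hf⟩
  have hF : fourierCoeff F = fourierCoeffOn hab f := by
    ext n
    rw [fourierCoeffOn_eq_integral, fourierCoeff_eq_intervalIntegral _ n a, add_sub_cancel]
    rfl
  rw [← hF] at hsum ⊢
  exact has_pointwise_sum_fourier_series_of_summable hsum x

end FourierCoeffOn

theorem hasSum_fourier_exp_of_contDiff_of_periodic {f : ℝ → ℂ} (hf : ContDiff ℝ 1 f)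
    (hper : Periodic f 1) (x : ℝ) :
    HasSum (fun m : ℤ => (∫ t in (0 : ℝ)..1, f t * exp (-(2 * π * I * m * t)))
      * exp (2 * π * I * m * x)) (f x) := by
  have hper' : Periodic f (1 - 0) := by rwa [sub_zero]
  convert hasSum_fourierCoeffOn_smul_fourier zero_lt_one hf.continuous hper'
    (summable_fourierCoeffOn_of_contDiff zero_lt_one hf (by simpa using (hper 0).symm)) x
    using 2 with m
  rw [fourierCoeffOn_eq_integral, fourier_coe_apply]
  simp only [sub_zero, div_one, one_smul, smul_eq_mul, fourier_coe_apply, ofReal_one,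
    Int.cast_neg, neg_mul, mul_neg, mul_comm (f _)]

theorem sum_range_exp_mul_div_eq_ite {q : ℕ} (hq : q ≠ 0) (m : ℤ) :
    ∑ j ∈ Finset.range q, exp (2 * π * I * m * (j / q)) = if (q : ℤ) ∣ m then (q : ℂ) else 0 := by
  have hζ := isPrimitiveRoot_exp q hq
  set ζ := exp (2 * π * I / q)
  have hpow : ∀ j : ℕ, exp (2 * π * I * m * (j / q)) = (ζ ^ m) ^ j := fun j => by
    rw [← zpow_natCast, ← zpow_mul, ← exp_int_mul]
    push_cast
    ring_nf
  simp only [hpow]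
  split_ifs with hdvd
  · simp [(hζ.zpow_eq_one_iff_dvd m).2 hdvd]
  · have hne : ζ ^ m ≠ 1 := mt (hζ.zpow_eq_one_iff_dvd m).1 hdvd
    have hq1 : (ζ ^ m) ^ q = 1 := by
      rw [← zpow_natCast, ← zpow_mul, mul_comm, zpow_mul, zpow_natCast, hζ.pow_eq_one, one_zpow]
    have hgeom := geom_sum_mul (ζ ^ m) q
    rw [hq1, sub_self] at hgeom
    exact (mul_eq_zero.1 hgeom).resolve_right (sub_ne_zero.2 hne)

theorem hasSum_exp_subseries_of_hasSum_exp {c : ℤ → ℂ} {f : ℝ → ℂ}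
    (hf : ∀ y : ℝ, HasSum (fun m : ℤ => c m * exp (2 * π * I * m * y)) (f y))
    {q : ℕ} (hq : q ≠ 0) (x : ℝ) :
    HasSum (fun n : ℤ => c (n * q) * exp (2 * π * I * n * q * x))
      ((q : ℂ)⁻¹ * ∑ j ∈ Finset.range q, f (x + j / q)) := by
  have hmean := (hasSum_sum fun j (_ : j ∈ Finset.range q) => hf (x + j / q)).mul_left (q : ℂ)⁻¹
  have hterm : ∀ m : ℤ, (q : ℂ)⁻¹ * ∑ j ∈ Finset.range q, c m * exp (2 * π * I * m * ↑(x + j / q))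
      = if (q : ℤ) ∣ m then c m * exp (2 * π * I * m * x) else 0 := fun m => by
    have hsplit : ∀ j : ℕ, c m * exp (2 * π * I * m * ↑(x + j / q))
        = c m * exp (2 * π * I * m * x) * exp (2 * π * I * m * (j / q)) := fun j => by
      rw [mul_assoc (c m), ← Complex.exp_add]
      push_cast
      ring_nf
    have hq' : (q : ℂ) ≠ 0 := Nat.cast_ne_zero.2 hq
    simp only [hsplit, ← Finset.mul_sum, sum_range_exp_mul_div_eq_ite hq]
    split_ifs
    · field_simp
    · simp
  simp only [hterm] at hmean
  have hmultiples : ∀ m ∉ Set.range (· * (q : ℤ)),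
      (if (q : ℤ) ∣ m then c m * exp (2 * π * I * m * x) else 0) = 0 := by
    rintro m hm
    rw [if_neg]
    rintro ⟨k, rfl⟩
    exact hm ⟨k, mul_comm _ _⟩
  convert ((mul_left_injective₀ (Int.natCast_ne_zero.2 hq)).hasSum_iff hmultiples).2 hmean using 1
  funext n
  rw [Function.comp_apply, if_pos (dvd_mul_left _ _)]
  push_cast
  ring_nf

end

theorem min_resonant_part_pos_of_min_pos_general
    (ψ : ℝ → ℝ) (hψ1 : ContDiff ℝ 1 ψ) (hψper : ∀ x, ψ (x + 1) = ψ x)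
    (q : ℕ) (hq : 1 ≤ q)
    (a : ℝ)
    (c : ℤ → ℂ)
    (hc : ∀ m : ℤ, c m = ∫ x in (0:ℝ)..1,
      (ψ x : ℂ) * Complex.exp (-(2 * (π : ℂ) * Complex.I * (m : ℂ) * (x : ℂ))))
    (Ψ : ℝ → ℝ)
    (hΨ : ∀ x : ℝ, (Ψ x : ℂ) =
      ∑' n : ℤ, c (n * q) * Complex.exp (2 * (π : ℂ) * Complex.I * (n : ℂ) * (q : ℂ) * (x : ℂ)))
    (hmin : ∀ x ∈ Set.Icc (0:ℝ) 1, 0 < a + ψ x) :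
    ∀ x ∈ Set.Icc (0:ℝ) 1, 0 < a + Ψ x := by
  intro x _
  have hpos (y : ℝ) : 0 < a + ψ y := by
    obtain ⟨z, hz, hyz⟩ := Function.Periodic.exists_mem_Ico₀ hψper one_pos y
    exact hyz ▸ hmin z (Set.Ico_subset_Icc_self hz)
  have hinv (y : ℝ) :
      HasSum (fun m : ℤ => c m * Complex.exp (2 * π * Complex.I * m * y)) (ψ y) := by
    have hψℂ : ContDiff ℝ 1 fun t => (ψ t : ℂ) := Complex.ofRealCLM.contDiff.comp hψ1
    simpa only [← hc] using hasSum_fourier_exp_of_contDiff_of_periodic hψℂ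
      (fun t => congrArg Complex.ofReal (hψper t)) y
  have hΨx : Ψ x = (q : ℝ)⁻¹ * ∑ j ∈ Finset.range q, ψ (x + j / q) := by
    apply Complex.ofReal_injective
    rw [hΨ, (hasSum_exp_subseries_of_hasSum_exp hinv (by omega) x).tsum_eq]
    push_cast
    rfl
  calc 0 < (q : ℝ)⁻¹ * ∑ j ∈ Finset.range q, (a + ψ (x + j / q)) :=
        mul_pos (inv_pos.2 (by exact_mod_cast hq))
          (Finset.sum_pos (fun j _ => hpos _) (Finset.nonempty_range_iff.2 (by omega)))
    _ = a + Ψ x := by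
      rw [hΨx, Finset.sum_add_distrib, Finset.sum_const, Finset.card_range, nsmul_eq_mul]
      field_simp

theorem min_resonant_part_pos_of_min_pos
    (ψ : ℝ → ℝ) (hψ1 : ContDiff ℝ 1 ψ) (hψper : ∀ x, ψ (x + 1) = ψ x)
    (hψmean : (∫ x in (0:ℝ)..1, ψ x) = 0)
    (p : ℤ) (q : ℕ) (hq : 1 ≤ q) (hpq : Nat.Coprime p.natAbs q)
    (a : ℝ)
    (c : ℤ → ℂ)
    (hc : ∀ m : ℤ, c m = ∫ x in (0:ℝ)..1,
      (ψ x : ℂ) * Complex.exp (-(2 * (π : ℂ) * Complex.I * (m : ℂ) * (x : ℂ))))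
    (Ψ : ℝ → ℝ)
    (hΨ : ∀ x : ℝ, (Ψ x : ℂ) =
      ∑' n : ℤ, c (n * q) * Complex.exp (2 * (π : ℂ) * Complex.I * (n : ℂ) * (q : ℂ) * (x : ℂ)))
    (hmin : ∀ x ∈ Set.Icc (0:ℝ) 1, 0 < a + ψ x) :
    ∀ x ∈ Set.Icc (0:ℝ) 1, 0 < a + Ψ x :=
  min_resonant_part_pos_of_min_pos_general ψ hψ1 hψper q hq a c hc Ψ hΨ hmin
end

section
/- Consider the Arnold circle map with lift F(x,α,β) = x + α + β sin(2πx), and a C¹ path μ ↦ (α(μ), β(μ)) with (α(0), β(0)) = (p/q, 0), where p and q are coprime integers with 0 ≤ p < q and q ≥ 2, and |β(μ)| < 1/(2π) for all μ near 0. If 0 < |α'(0)| < ∞, then the rotation number ρ(μ) of F(·, α(μ), β(μ)) is differentiable at μ = 0 and ρ'(0) = α'(0). -/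
open Filter Real

/-- `r` is the rotation number of the lift `F`, i.e. `(Fⁿ(0) - 0)/n → r`. -/
def HasRotNum (F : ℝ → ℝ) (r : ℝ) : Prop :=
  Filter.Tendsto (fun n : ℕ => F^[n] 0 / n) Filter.atTop (nhds r)

open Asymptotics Finset Topology

/-!
For `F = arnoldLift a b` one has `F^[q] x - x - q a = b ∑_{k<q} sin (2π F^[k] x)`. Replacing
`F^[k] x` by the rigid orbit `x + k p / q` costs `O(|b| + |a - p / q|)` in each term, and the rigid
sum `∑_{k<q} sin (2π (x + k p / q))` vanishes as soon as `q ∤ p`. So `F^[q]` displaces every point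
by `q a + O(b (|b| + |a - p / q|))`, whence `|ρ - a| = O(b (|b| + |a - p / q|))`. Along the path
this is `O(μ) · o(1) = o(μ)`, because `β (0) = 0` and `α (μ) → p / q`: `ρ` and `α` have the same
derivative at `0`.
-/

namespace HasRotNum

variable {F : ℝ → ℝ} {r : ℝ}

theorem iterate (hF : HasRotNum F r) (q : ℕ) : HasRotNum F^[q] (q * r) := by
  rcases q.eq_zero_or_pos with rfl | hq
  · simp [HasRotNum]
  have hsub : Tendsto (fun n : ℕ => F^[q * n] 0 / (q * n : ℕ)) atTop (𝓝 r) :=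
    hF.comp (tendsto_id.const_mul_atTop' hq)
  refine (hsub.const_mul (q : ℝ)).congr' ?_
  filter_upwards [eventually_ne_atTop 0] with n hn
  rw [← Function.iterate_mul]
  push_cast
  field_simp

theorem abs_sub_le (hF : HasRotNum F r) {c M : ℝ} (h : ∀ x, |F x - x - c| ≤ M) :
    |r - c| ≤ M := by
  have hiter (n : ℕ) : |F^[n] 0 - n * c| ≤ n * M := by
    induction n with
    | zero => simp
    | succ n ih =>
      rw [Function.iterate_succ_apply']
      calc |F (F^[n] 0) - (n + 1 : ℕ) * c|
          = |(F (F^[n] 0) - F^[n] 0 - c) + (F^[n] 0 - n * c)| := by push_cast; ring_nf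
        _ ≤ M + n * M := (abs_add_le _ _).trans (add_le_add (h _) ih)
        _ = (n + 1 : ℕ) * M := by push_cast; ring
  refine le_of_tendsto (hF.sub_const c).abs ?_
  filter_upwards [eventually_gt_atTop 0] with n hn
  have hn' : (0 : ℝ) < n := by exact_mod_cast hn
  rw [show F^[n] 0 / n - c = (F^[n] 0 - n * c) / n by field_simp, abs_div, abs_of_pos hn',
    div_le_iff₀' hn']
  exact hiter n

end HasRotNum

theorem sum_range_sin_two_pi_mul_div_mul_add_eq_zero {p : ℤ} {q : ℕ} (hpq : ¬ (q : ℤ) ∣ p)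
    (θ : ℝ) : ∑ k ∈ range q, sin (2 * π * p / q * k + θ) = 0 := by
  rcases eq_or_ne q 0 with rfl | hq
  · simp
  have hq' : (q : ℝ) ≠ 0 := by exact_mod_cast hq
  rw [Real.sum_sin q ?_ θ]
  · rw [show q * (2 * π * p / q) / 2 = p * π by field_simp, sin_int_mul_pi, zero_mul, zero_div]
  · intro k hk
    field_simp at hk
    exact hpq ⟨k, by exact_mod_cast hk⟩

noncomputable def arnoldLift (a b x : ℝ) : ℝ := x + a + b * sin (2 * π * x)

section ArnoldLift

variable (a b : ℝ)

theorem arnoldLift_iterate (n : ℕ) (x : ℝ) :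
    (arnoldLift a b)^[n] x =
      x + n * a + b * ∑ k ∈ range n, sin (2 * π * (arnoldLift a b)^[k] x) := by
  induction n with
  | zero => simp
  | succ n ih =>
    rw [Function.iterate_succ_apply', sum_range_succ, arnoldLift, ih]
    push_cast
    ring

theorem abs_arnoldLift_iterate_sub_le (c : ℝ) (n : ℕ) (x : ℝ) :
    |(arnoldLift a b)^[n] x - x - n * c| ≤ n * (|b| + |a - c|) := by
  have hsum : |∑ k ∈ range n, sin (2 * π * (arnoldLift a b)^[k] x)| ≤ n :=
    (abs_sum_le_sum_abs _ _).trans ((sum_le_sum fun _ _ => abs_sin_le_one _).trans (by simp))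
  rw [arnoldLift_iterate]
  calc _ = |b * ∑ k ∈ range n, sin (2 * π * (arnoldLift a b)^[k] x) + n * (a - c)| := by
        congr 1; ring
    _ ≤ |b| * n + n * |a - c| := by
        grw [abs_add_le, abs_mul, abs_mul, hsum, Nat.abs_cast]
    _ = n * (|b| + |a - c|) := by ring

theorem abs_arnoldLift_iterate_sub_le_of_not_dvd {p : ℤ} {q : ℕ} (hpq : ¬ (q : ℤ) ∣ p) (x : ℝ) :
    |(arnoldLift a b)^[q] x - x - q * a| ≤ 2 * π * q ^ 2 * |b| * (|b| + |a - p / q|) := by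
  have hterm : ∀ k ∈ range q, |sin (2 * π * (arnoldLift a b)^[k] x) -
      sin (2 * π * p / q * k + 2 * π * x)| ≤ 2 * π * (q * (|b| + |a - p / q|)) := by
    intro k hk
    have hkq : (k : ℝ) ≤ q := by exact_mod_cast (mem_range.mp hk).le
    calc _ ≤ |2 * π * (arnoldLift a b)^[k] x - (2 * π * p / q * k + 2 * π * x)| :=
          abs_sin_sub_sin_le _ _
      _ = |2 * π * ((arnoldLift a b)^[k] x - x - k * (p / q))| := by congr 1; ring
      _ = 2 * π * |(arnoldLift a b)^[k] x - x - k * (p / q)| := by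
          rw [abs_mul, abs_of_pos two_pi_pos]
      _ ≤ 2 * π * (q * (|b| + |a - p / q|)) := by
          gcongr
          exact (abs_arnoldLift_iterate_sub_le a b _ k x).trans (by gcongr)
  have hsum : |∑ k ∈ range q, sin (2 * π * (arnoldLift a b)^[k] x)| ≤
      2 * π * q ^ 2 * (|b| + |a - p / q|) := by
    rw [← sub_zero (∑ k ∈ range q, _),
      ← sum_range_sin_two_pi_mul_div_mul_add_eq_zero hpq (2 * π * x), ← sum_sub_distrib]
    calc _ ≤ _ := abs_sum_le_sum_abs _ _
      _ ≤ ∑ _k ∈ range q, 2 * π * (q * (|b| + |a - p / q|)) := sum_le_sum hterm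
      _ = 2 * π * q ^ 2 * (|b| + |a - p / q|) := by
          rw [sum_const, card_range, nsmul_eq_mul]
          ring
  have hdisp : (arnoldLift a b)^[q] x - x - q * a =
      b * ∑ k ∈ range q, sin (2 * π * (arnoldLift a b)^[k] x) := by
    rw [arnoldLift_iterate]
    ring
  rw [hdisp, abs_mul]
  calc _ ≤ |b| * (2 * π * q ^ 2 * (|b| + |a - p / q|)) := by gcongr
    _ = _ := by ring

theorem abs_sub_le_of_hasRotNum_arnoldLift {p : ℤ} {q : ℕ} (hq : 0 < q)
    (hpq : ¬ (q : ℤ) ∣ p) {r : ℝ} (hr : HasRotNum (arnoldLift a b) r) :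
    |r - a| ≤ 2 * π * q * |b| * (|b| + |a - p / q|) := by
  have hq' : (0 : ℝ) < q := by exact_mod_cast hq
  have h := (hr.iterate q).abs_sub_le (abs_arnoldLift_iterate_sub_le_of_not_dvd a b hpq)
  rw [← mul_sub, abs_mul, Nat.abs_cast] at h
  refine le_of_mul_le_mul_left ?_ hq'
  linarith

end ArnoldLift

theorem HasDerivAt.of_isLittleO_sub {𝕜 E : Type*} [NontriviallyNormedField 𝕜]
    [NormedAddCommGroup E] [NormedSpace 𝕜 E] {f g : 𝕜 → E} {g' : E} {x : 𝕜}
    (hg : HasDerivAt g g' x) (h : (fun y => f y - g y) =o[𝓝 x] fun y => y - x) :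
    HasDerivAt f g' x := by
  have hx : f x = g x := sub_eq_zero.mp <| mem_of_mem_nhds h.isBigO.eq_zero_imp (sub_self x)
  rw [hasDerivAt_iff_isLittleO] at hg ⊢
  refine (hg.add h).congr_left fun y => ?_
  rw [hx]
  abel

theorem arnold_map_rotation_number_differentiable_q_ge_two_general
    (p : ℤ) (q : ℕ) (hq : 2 ≤ q)
    (hpq : Nat.Coprime p.natAbs q)
    (α β : ℝ → ℝ) (hα : ContDiff ℝ 1 α) (hβ : ContDiff ℝ 1 β)
    (hα0 : α 0 = (p : ℝ) / q) (hβ0 : β 0 = 0)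
    (ε : ℝ) (hε : 0 < ε)
    (ρ : ℝ → ℝ)
    (hρ : ∀ μ : ℝ, |μ| < ε →
      HasRotNum (fun x => x + α μ + β μ * Real.sin (2 * π * x)) (ρ μ)) :
    HasDerivAt ρ (deriv α 0) 0 := by
  have hαd : HasDerivAt α (deriv α 0) 0 := (hα.differentiable one_ne_zero 0).hasDerivAt
  have hβd : HasDerivAt β (deriv β 0) 0 := (hβ.differentiable one_ne_zero 0).hasDerivAt
  have hndvd : ¬ (q : ℤ) ∣ p := fun h => by
    have := Nat.Coprime.eq_one_of_dvd hpq.symm (Int.natCast_dvd.mp h)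
    omega
  have hbound : ∀ᶠ μ in 𝓝 0, ‖ρ μ - α μ‖ ≤ 2 * π * q * ‖β μ * (|β μ| + |α μ - α 0|)‖ := by
    filter_upwards [Metric.ball_mem_nhds 0 hε] with μ hμ
    rw [mem_ball_zero_iff, Real.norm_eq_abs] at hμ
    have h := abs_sub_le_of_hasRotNum_arnoldLift (α μ) (β μ) (by omega) hndvd (hρ μ hμ)
    rw [Real.norm_eq_abs, Real.norm_eq_abs, abs_mul,
      abs_of_nonneg (add_nonneg (abs_nonneg (β μ)) (abs_nonneg (α μ - α 0))), hα0]
    linarith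
  have hβO : β =O[𝓝 0] fun μ => μ - 0 := by simpa [hβ0] using hβd.isBigO_sub
  have hsmall : (fun μ => |β μ| + |α μ - α 0|) =o[𝓝 0] fun _ => (1 : ℝ) := by
    have h : Tendsto (fun μ => |β μ| + |α μ - α 0|) (𝓝 0) (𝓝 (|β 0| + |α 0 - α 0|)) :=
      (hβd.continuousAt.abs.add (hαd.continuousAt.sub continuousAt_const).abs).tendsto
    rw [isLittleO_one_iff]
    simpa [hβ0] using h
  have hquad : (fun μ => β μ * (|β μ| + |α μ - α 0|)) =o[𝓝 0] fun μ => μ - 0 := by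
    simpa using hβO.mul_isLittleO hsmall
  exact hαd.of_isLittleO_sub ((IsBigO.of_bound _ hbound).trans_isLittleO hquad)

theorem arnold_map_rotation_number_differentiable_q_ge_two
    (p : ℤ) (q : ℕ) (hq : 2 ≤ q) (hp0 : 0 ≤ p) (hpq' : p < (q : ℤ))
    (hpq : Nat.Coprime p.natAbs q)
    (α β : ℝ → ℝ) (hα : ContDiff ℝ 1 α) (hβ : ContDiff ℝ 1 β)
    (hα0 : α 0 = (p : ℝ) / q) (hβ0 : β 0 = 0)
    (ε : ℝ) (hε : 0 < ε)
    (hβsmall : ∀ μ : ℝ, |μ| < ε → |β μ| < 1 / (2 * π))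
    (hα' : deriv α 0 ≠ 0)
    (ρ : ℝ → ℝ)
    (hρ : ∀ μ : ℝ, |μ| < ε →
      HasRotNum (fun x => x + α μ + β μ * Real.sin (2 * π * x)) (ρ μ)) :
    HasDerivAt ρ (deriv α 0) 0 :=
  arnold_map_rotation_number_differentiable_q_ge_two_general p q hq hpq α β hα hβ hα0 hβ0 ε hε ρ hρ
end

section
/- Consider the modified Arnold map with lift G(x,α,β,γ) = x + α + β sin(2πx) + γ cos(4πx) along the path α(μ) = (1 + u²/2)μ, β(μ) = 2uμ, γ(μ) = −(u²/2)μ, for a fixed u ∈ (−1/2, 1/2). Then the rotation number ρ(μ) is differentiable at μ = 0 and ρ'(0) = (1 − u²)^{3/2}. -/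
/-! Along the path the lift is `x ↦ x + μ f x` with `f x = (1 + u sin 2πx)²`. If `H' = c / f` and
`H - id` is bounded, then `H (x + μ f x) = H x + c μ + O(μ²)` uniformly in `x`, because `c / f` is
Lipschitz. So `H` conjugates the lift to within `O(μ²)` of the translation by `c μ`, whence
`ρ(μ) = c μ + O(μ²)`. For this `f` such an `H` exists in closed form, with
`c = (∫₀¹ dx / f x)⁻¹ = (1 - u²)^(3/2)`. -/

open Filter Real

open Topology Asymptotics

theorem HasRotNum.abs_sub_le_of_conj_near_translation {F H : ℝ → ℝ} {r a e C : ℝ}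
    (hr : HasRotNum F r) (hH : ∀ x, |H x - x| ≤ C) (hstep : ∀ x, |H (F x) - H x - a| ≤ e) :
    |r - a| ≤ e := by
  have hiter (n : ℕ) : |H (F^[n] 0) - H 0 - n * a| ≤ n * e := by
    induction n with
    | zero => simp
    | succ n ih =>
      rw [Function.iterate_succ_apply']
      calc |H (F (F^[n] 0)) - H 0 - (n + 1 : ℕ) * a|
          = |(H (F (F^[n] 0)) - H (F^[n] 0) - a) + (H (F^[n] 0) - H 0 - n * a)| := by
            push_cast; ring_nf
        _ ≤ e + n * e := (abs_add_le _ _).trans (add_le_add (hstep _) ih)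
        _ = (n + 1 : ℕ) * e := by push_cast; ring
  have hbound (n : ℕ) (hn : 1 ≤ n) : |F^[n] 0 / n - a| ≤ e + 2 * C / n := by
    have hn0 : (0 : ℝ) < n := by exact_mod_cast hn
    have hnum : |F^[n] 0 - n * a| ≤ n * e + 2 * C :=
      calc |F^[n] 0 - n * a|
          = |(H (F^[n] 0) - H 0 - n * a) - (H (F^[n] 0) - F^[n] 0) + (H 0 - 0)| := by ring_nf
        _ ≤ |H (F^[n] 0) - H 0 - n * a| + |H (F^[n] 0) - F^[n] 0| + |H 0 - 0| :=
            (abs_add_le _ _).trans (add_le_add_left (abs_sub _ _) _)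
        _ ≤ n * e + C + C := add_le_add (add_le_add (hiter n) (hH _)) (hH 0)
        _ = n * e + 2 * C := by ring
    rw [div_sub' hn0.ne', abs_div, abs_of_pos hn0, div_le_iff₀ hn0, add_mul,
      div_mul_cancel₀ _ hn0.ne']
    rwa [mul_comm e]
  have hlim : Tendsto (fun n : ℕ => e + 2 * C / n) atTop (𝓝 (e + 0)) :=
    tendsto_const_nhds.add (tendsto_const_div_atTop_nhds_zero_nat _)
  refine le_of_tendsto_of_tendsto ((hr.sub_const a).abs) (by simpa using hlim) ?_
  filter_upwards [eventually_ge_atTop 1] with n hn using hbound n hn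

theorem abs_sub_sub_mul_le_of_hasDerivAt {H g : ℝ → ℝ} {K : ℝ} (hH : ∀ y, HasDerivAt H (g y) y)
    (hg : ∀ x y, |g x - g y| ≤ K * |x - y|) (x h : ℝ) :
    |H (x + h) - H x - g x * h| ≤ K * h ^ 2 := by
  have hK : 0 ≤ K := by simpa using (abs_nonneg _).trans (hg 1 0)
  have hφ (y : ℝ) : HasDerivAt (fun y => H y - g x * y) (g y - g x) y :=
    ((hH y).sub ((hasDerivAt_id' y).const_mul (g x))).congr_deriv (by ring)
  have hφ' : ∀ y ∈ Set.uIcc x (x + h), ‖g y - g x‖ ≤ K * |h| := fun y hy =>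
    calc ‖g y - g x‖ ≤ K * |y - x| := hg y x
      _ ≤ K * |h| := by
          have := Set.abs_sub_left_of_mem_uIcc hy
          rw [add_sub_cancel_left] at this
          gcongr
  have := Convex.norm_image_sub_le_of_norm_hasDerivWithin_le
    (fun y _ => (hφ y).hasDerivWithinAt) hφ' (convex_uIcc _ _) Set.left_mem_uIcc
    Set.right_mem_uIcc
  simp only [Real.norm_eq_abs, add_sub_cancel_left] at this
  calc |H (x + h) - H x - g x * h| = |H (x + h) - g x * (x + h) - (H x - g x * x)| := by ring_nf
    _ ≤ K * |h| * |h| := this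
    _ = K * h ^ 2 := by rw [mul_assoc, ← abs_mul, ← sq, abs_sq]

theorem abs_div_sub_div_le_of_lipschitz {f : ℝ → ℝ} {m L : ℝ} (hm : 0 < m) (hfm : ∀ x, m ≤ f x)
    (hfL : ∀ x y, |f x - f y| ≤ L * |x - y|) (c x y : ℝ) :
    |c / f x - c / f y| ≤ |c| * L / m ^ 2 * |x - y| := by
  have hx : 0 < f x := hm.trans_le (hfm x)
  have hy : 0 < f y := hm.trans_le (hfm y)
  rw [div_sub_div _ _ hx.ne' hy.ne', abs_div, abs_of_pos (mul_pos hx hy),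
    div_le_iff₀ (mul_pos hx hy), show c * f y - f x * c = c * (f y - f x) by ring, abs_mul,
    abs_sub_comm]
  have hm2 : m ^ 2 ≤ f x * f y := by nlinarith [hfm x, hfm y]
  calc |c| * |f x - f y| ≤ |c| * (L * |x - y|) := by gcongr; exact hfL x y
    _ = |c| * L / m ^ 2 * |x - y| * m ^ 2 := by field_simp
    _ ≤ |c| * L / m ^ 2 * |x - y| * (f x * f y) := by
        have : 0 ≤ |c| * L / m ^ 2 * |x - y| := by
          have hL : 0 ≤ L := by simpa using (abs_nonneg _).trans (hfL 1 0)
          positivity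
        gcongr

theorem HasRotNum.abs_sub_mul_le_of_hasDerivAt_div {f H : ℝ → ℝ} {c m M L C μ r : ℝ}
    (hr : HasRotNum (fun x => x + μ * f x) r) (hm : 0 < m) (hfm : ∀ x, m ≤ f x)
    (hfM : ∀ x, f x ≤ M) (hfL : ∀ x y, |f x - f y| ≤ L * |x - y|)
    (hH : ∀ x, HasDerivAt H (c / f x) x) (hHC : ∀ x, |H x - x| ≤ C) :
    |r - c * μ| ≤ |c| * L / m ^ 2 * M ^ 2 * μ ^ 2 := by
  have hg := abs_div_sub_div_le_of_lipschitz hm hfm hfL c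
  have hK : 0 ≤ |c| * L / m ^ 2 := by simpa using (abs_nonneg _).trans (hg 1 0)
  refine hr.abs_sub_le_of_conj_near_translation hHC fun x => ?_
  have hx : 0 < f x := hm.trans_le (hfm x)
  calc |H (x + μ * f x) - H x - c * μ| = |H (x + μ * f x) - H x - c / f x * (μ * f x)| := by
        congr 2
        field_simp
    _ ≤ |c| * L / m ^ 2 * (μ * f x) ^ 2 := abs_sub_sub_mul_le_of_hasDerivAt hH hg x _
    _ ≤ |c| * L / m ^ 2 * M ^ 2 * μ ^ 2 := by
        rw [mul_pow, mul_comm (μ ^ 2), ← mul_assoc]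
        gcongr
        exact hfM x

theorem hasDerivAt_zero_of_abs_sub_mul_le_sq {ρ : ℝ → ℝ} {c K : ℝ}
    (h : ∀ᶠ μ in 𝓝 0, |ρ μ - c * μ| ≤ K * μ ^ 2) : HasDerivAt ρ c 0 := by
  have hρ0 : ρ 0 = 0 := by simpa using h.self_of_nhds
  rw [hasDerivAt_iff_isLittleO]
  simp only [hρ0, sub_zero, smul_eq_mul]
  refine (IsBigO.of_bound K ?_).trans_isLittleO (isLittleO_pow_id one_lt_two)
  filter_upwards [h] with μ hμ
  simpa [mul_comm μ c, abs_of_nonneg (sq_nonneg μ)] using hμ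

noncomputable def arnoldDensity (u x : ℝ) : ℝ := (1 + u * sin (2 * π * x)) ^ 2

/-- `θ + arnoldPhase u θ` is an antiderivative of `(1 - u²)^(3/2) / (1 + u sin θ)²`, found by the
half-angle substitution; the `arctan` form keeps it continuous on all of `ℝ`. -/
noncomputable def arnoldPhase (u θ : ℝ) : ℝ :=
  2 * arctan (u * cos θ / (1 + √(1 - u ^ 2) + u * sin θ))
    + √(1 - u ^ 2) * u * cos θ / (1 + u * sin θ)

noncomputable def arnoldConj (u x : ℝ) : ℝ := x + arnoldPhase u (2 * π * x) / (2 * π)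

theorem modified_arnold_lift_eq (u μ x : ℝ) :
    x + (1 + u ^ 2 / 2) * μ + 2 * u * μ * sin (2 * π * x) - u ^ 2 / 2 * μ * cos (4 * π * x)
      = x + μ * arnoldDensity u x := by
  rw [show 4 * π * x = 2 * (2 * π * x) by ring, cos_two_mul, cos_sq', arnoldDensity]
  ring

theorem one_sub_abs_le_one_add_mul_sin (u θ : ℝ) : 1 - |u| ≤ 1 + u * sin θ := by
  have : |u * sin θ| ≤ |u| := by
    simpa [abs_mul] using mul_le_mul_of_nonneg_left (abs_sin_le_one θ) (abs_nonneg u)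
  linarith [neg_abs_le (u * sin θ)]

theorem one_add_mul_sin_le_one_add_abs (u θ : ℝ) : 1 + u * sin θ ≤ 1 + |u| := by
  have : |u * sin θ| ≤ |u| := by
    simpa [abs_mul] using mul_le_mul_of_nonneg_left (abs_sin_le_one θ) (abs_nonneg u)
  linarith [le_abs_self (u * sin θ)]

theorem sq_one_sub_abs_le_arnoldDensity {u : ℝ} (hu : |u| ≤ 1) (x : ℝ) :
    (1 - |u|) ^ 2 ≤ arnoldDensity u x :=
  pow_le_pow_left₀ (by linarith) (one_sub_abs_le_one_add_mul_sin u _) 2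

theorem arnoldDensity_le_four {u : ℝ} (hu : |u| ≤ 1) (x : ℝ) : arnoldDensity u x ≤ 4 := by
  have h₁ := one_sub_abs_le_one_add_mul_sin u (2 * π * x)
  have h₂ := one_add_mul_sin_le_one_add_abs u (2 * π * x)
  rw [arnoldDensity]
  nlinarith

theorem abs_arnoldDensity_sub_le {u : ℝ} (hu : |u| ≤ 1) (x y : ℝ) :
    |arnoldDensity u x - arnoldDensity u y| ≤ 8 * π * |x - y| := by
  set a := sin (2 * π * x)
  set b := sin (2 * π * y)
  have hsum : |2 + u * (a + b)| ≤ 4 := by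
    have := one_sub_abs_le_one_add_mul_sin u (2 * π * x)
    have := one_sub_abs_le_one_add_mul_sin u (2 * π * y)
    have := one_add_mul_sin_le_one_add_abs u (2 * π * x)
    have := one_add_mul_sin_le_one_add_abs u (2 * π * y)
    exact abs_le.2 ⟨by linarith, by linarith⟩
  have hdiff : |a - b| ≤ 2 * π * |x - y| := by
    simpa [← mul_sub, abs_mul, abs_of_pos two_pi_pos] using
      abs_sin_sub_sin_le (2 * π * x) (2 * π * y)
  calc |arnoldDensity u x - arnoldDensity u y| = |2 + u * (a + b)| * |u| * |a - b| := by
        rw [arnoldDensity, arnoldDensity, ← abs_mul, ← abs_mul]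
        congr 1
        ring
    _ ≤ 4 * 1 * (2 * π * |x - y|) := by gcongr
    _ = 8 * π * |x - y| := by ring

theorem hasDerivAt_arnoldPhase {u : ℝ} (hu : |u| < 1) (θ : ℝ) :
    HasDerivAt (arnoldPhase u) (√(1 - u ^ 2) ^ 3 / (1 + u * sin θ) ^ 2 - 1) θ := by
  set s := √(1 - u ^ 2)
  have hs2 : s ^ 2 = 1 - u ^ 2 := sq_sqrt (by nlinarith [sq_abs u, abs_nonneg u])
  have hs : 0 ≤ s := sqrt_nonneg _
  have hP : 0 < 1 + u * sin θ := by linarith [one_sub_abs_le_one_add_mul_sin u θ]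
  have hD : 0 < 1 + s + u * sin θ := by linarith
  have hP' : HasDerivAt (fun t => 1 + u * sin t) (u * cos θ) θ := by
    simpa using ((hasDerivAt_sin θ).const_mul u).const_add 1
  have hD' : HasDerivAt (fun t => 1 + s + u * sin t) (u * cos θ) θ := by
    simpa using ((hasDerivAt_sin θ).const_mul u).const_add (1 + s)
  have harctan := ((hasDerivAt_arctan _).comp θ
    (((hasDerivAt_cos θ).const_mul u).div hD' hD.ne')).const_mul 2
  have hfrac := ((hasDerivAt_cos θ).const_mul (s * u)).div hP' hP.ne'
  refine (harctan.add hfrac).congr_deriv ?_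
  simp only [Pi.div_apply]
  set S := sin θ
  set C := cos θ
  have hC : C ^ 2 = 1 - S ^ 2 := cos_sq' θ
  have hden : 1 + (u * C / (1 + s + u * S)) ^ 2
      = 2 * (1 + s) * (1 + u * S) / (1 + s + u * S) ^ 2 := by
    field_simp
    linear_combination hs2 + u ^ 2 * hC
  have hnum : u * -S * (1 + s + u * S) - u * C * (u * C) = (1 + s) * (s - 1 - u * S) := by
    linear_combination -hs2 - u ^ 2 * hC
  rw [hden, hnum]
  field_simp
  linear_combination -s * hs2 - s * u ^ 2 * hC

theorem hasDerivAt_arnoldConj {u : ℝ} (hu : |u| < 1) (x : ℝ) :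
    HasDerivAt (arnoldConj u) (√(1 - u ^ 2) ^ 3 / arnoldDensity u x) x := by
  have hlin : HasDerivAt (fun x : ℝ => 2 * π * x) (2 * π) x := by
    simpa using (hasDerivAt_id x).const_mul (2 * π)
  refine ((hasDerivAt_id x).add
    (((hasDerivAt_arnoldPhase hu _).comp x hlin).div_const (2 * π))).congr_deriv ?_
  rw [arnoldDensity]
  field_simp
  ring

theorem exists_abs_arnoldConj_sub_le {u : ℝ} (hu : |u| < 1) :
    ∃ C, ∀ x, |arnoldConj u x - x| ≤ C := by
  have hperiodic : Function.Periodic (fun x => arnoldPhase u (2 * π * x) / (2 * π)) 1 := by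
    intro x
    simp only [arnoldPhase, mul_add, mul_one, sin_add_two_pi, cos_add_two_pi]
  have hcont : Continuous (fun x => arnoldPhase u (2 * π * x) / (2 * π)) :=
    ((continuous_iff_continuousAt.2 fun θ => (hasDerivAt_arnoldPhase hu θ).continuousAt).comp
      (continuous_const.mul continuous_id)).div_const _
  obtain ⟨C, hC⟩ := isBounded_iff_forall_norm_le.1
    (hperiodic.isBounded_of_continuous one_ne_zero hcont)
  refine ⟨C, fun x => ?_⟩
  simpa only [arnoldConj, add_sub_cancel_left, Real.norm_eq_abs] using hC _ ⟨x, rfl⟩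

theorem exists_abs_rotNum_sub_le {u : ℝ} (hu : |u| < 1) :
    ∃ K, ∀ μ r, HasRotNum (fun x => x + μ * arnoldDensity u x) r →
      |r - √(1 - u ^ 2) ^ 3 * μ| ≤ K * μ ^ 2 := by
  obtain ⟨C, hC⟩ := exists_abs_arnoldConj_sub_le hu
  exact ⟨_, fun μ r hr => hr.abs_sub_mul_le_of_hasDerivAt_div (pow_pos (sub_pos.2 hu) 2)
    (sq_one_sub_abs_le_arnoldDensity hu.le) (arnoldDensity_le_four hu.le)
    (abs_arnoldDensity_sub_le hu.le) (hasDerivAt_arnoldConj hu) hC⟩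

theorem modified_arnold_map_derivative_special_path
    (u : ℝ) (hu : u ∈ Set.Ioo (-(1/2) : ℝ) (1/2))
    (ε : ℝ) (hε : 0 < ε)
    (ρ : ℝ → ℝ)
    (hρ : ∀ μ : ℝ, |μ| < ε →
      HasRotNum (fun x => x + (1 + u ^ 2 / 2) * μ + 2 * u * μ * Real.sin (2 * π * x)
        - u ^ 2 / 2 * μ * Real.cos (4 * π * x)) (ρ μ)) :
    HasDerivAt ρ ((1 - u ^ 2) ^ ((3 : ℝ) / 2)) 0 := by
  have hu1 : |u| < 1 := abs_lt.2 ⟨by linarith [hu.1], by linarith [hu.2]⟩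
  obtain ⟨K, hK⟩ := exists_abs_rotNum_sub_le hu1
  have hsmall : ∀ᶠ μ in 𝓝 (0 : ℝ), |μ| < ε :=
    (continuous_abs.tendsto' 0 0 abs_zero).eventually_lt_const hε
  have hexp : (1 - u ^ 2) ^ ((3 : ℝ) / 2) = √(1 - u ^ 2) ^ 3 := by
    rw [show (3 : ℝ) / 2 = 1 / 2 * (3 : ℕ) by norm_num,
      rpow_mul (by nlinarith [sq_abs u, abs_nonneg u]), rpow_natCast, sqrt_eq_rpow]
  rw [hexp]
  refine hasDerivAt_zero_of_abs_sub_mul_le_sq (K := K) ?_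
  filter_upwards [hsmall] with μ hμ
  exact hK μ _ (by simpa only [modified_arnold_lift_eq] using hρ μ hμ)
end
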